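/- arXiv:2009.10666 — 2 statements merged into one kernel-verified Lean document; each statement's English description precedes it below -/
import Mathlib

section
/- Let N ≥ 1, let A be an N×N real matrix with nonnegative entries and zero diagonal whose associated digraph (edge from j to i iff A_{ij} > 0) is strongly connected, and let L = D − A be the Laplacian. Then there exists a vector ω ∈ ℝ^N with all entries strictly positive and Σ_i ω_i = 1 such that ωᵀ L = 0; that is, ω is a positive left eigenvector of L associated with the zero eigenvalue. -/
/-!
Since `L 𝟙 = 0`, the Laplacian is singular and has a nonzero left null vector `v`. For any `w`
the entries of `wᵀ L` sum to `wᵀ L 𝟙 = 0`, and the triangle inequality makes every entry of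
`|v|ᵀ L` nonpositive, so `|v|` is a nonnegative left null vector. The zero set of a nonnegative
left null vector is closed under the edges of the digraph, hence empty by strong connectivity;
normalizing `|v|` gives `ω`.
-/

open Finset

namespace Matrix

variable {n R : Type*} [Fintype n] [DecidableEq n]

section Ring

variable [Ring R] {A : Matrix n n R}

def laplacian (A : Matrix n n R) : Matrix n n R :=
  diagonal (fun i => ∑ j, A i j) - A

theorem vecMul_laplacian_apply (w : n → R) (j : n) :
    (w ᵥ* A.laplacian) j = w j * ∑ k, A j k - ∑ i, w i * A i j := by
  rw [laplacian, vecMul_sub, Pi.sub_apply, vecMul_diagonal]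
  rfl

theorem laplacian_mulVec_one : A.laplacian *ᵥ 1 = 0 := by
  rw [laplacian, sub_mulVec, sub_eq_zero]
  ext i
  rw [mulVec_diagonal]
  simp [mulVec, dotProduct]

theorem sum_vecMul_laplacian (w : n → R) : ∑ j, (w ᵥ* A.laplacian) j = 0 := by
  simpa [dotProduct, laplacian_mulVec_one] using (dotProduct_mulVec w A.laplacian 1).symm

end Ring

theorem exists_ne_zero_vecMul_laplacian_eq_zero [CommRing R] [IsDomain R] [Nonempty n]
    {A : Matrix n n R} :
    ∃ v ≠ 0, v ᵥ* A.laplacian = 0 :=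
  exists_vecMul_eq_zero_iff.mpr <|
    exists_mulVec_eq_zero_iff.mp ⟨1, one_ne_zero, laplacian_mulVec_one⟩

section Nonneg

variable [Ring R] [LinearOrder R] [IsStrictOrderedRing R] {A : Matrix n n R}
variable (hA : ∀ i j, 0 ≤ A i j)
include hA

theorem abs_vecMul_laplacian_apply_nonpos {v : n → R} (hv : v ᵥ* A.laplacian = 0) (j : n) :
    (|v| ᵥ* A.laplacian) j ≤ 0 := by
  have hcol : v j * ∑ k, A j k = ∑ i, v i * A i j := by
    have := vecMul_laplacian_apply (A := A) v j
    rw [hv, Pi.zero_apply] at this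
    exact sub_eq_zero.mp this.symm
  rw [vecMul_laplacian_apply, sub_nonpos]
  calc |v| j * ∑ k, A j k = |∑ i, v i * A i j| := by
        rw [← hcol, abs_mul, abs_of_nonneg (sum_nonneg fun k _ => hA j k), Pi.abs_apply]
    _ ≤ ∑ i, |v i * A i j| := abs_sum_le_sum_abs _ _
    _ = ∑ i, |v| i * A i j := by simp [abs_mul, abs_of_nonneg (hA _ j)]

theorem abs_vecMul_laplacian_eq_zero {v : n → R} (hv : v ᵥ* A.laplacian = 0) :
    |v| ᵥ* A.laplacian = 0 := by
  funext j
  exact (sum_eq_zero_iff_of_nonpos fun j _ => abs_vecMul_laplacian_apply_nonpos hA hv j).mp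
    (sum_vecMul_laplacian |v|) j (mem_univ j)

variable {w : n → R} (hw : ∀ i, 0 ≤ w i) (hwL : w ᵥ* A.laplacian = 0)
include hw hwL

theorem eq_zero_of_vecMul_laplacian_eq_zero {i j : n} (hj : w j = 0) (hij : 0 < A i j) :
    w i = 0 := by
  have hcol : ∑ k, w k * A k j = 0 := by
    have := vecMul_laplacian_apply (A := A) w j
    rwa [hwL, hj, Pi.zero_apply, zero_mul, zero_sub, zero_eq_neg] at this
  have := (sum_eq_zero_iff_of_nonneg fun k _ => mul_nonneg (hw k) (hA k j)).mp hcol i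
    (mem_univ i)
  exact (mul_eq_zero.mp this).resolve_right hij.ne'

theorem eq_zero_of_reflTransGen {i j : n} (hj : w j = 0)
    (hji : Relation.ReflTransGen (fun a b => 0 < A b a) j i) : w i = 0 := by
  induction hji with
  | refl => exact hj
  | tail _ hedge ih => exact eq_zero_of_vecMul_laplacian_eq_zero hA hw hwL ih hedge

theorem pos_of_vecMul_laplacian_eq_zero
    (hsc : ∀ i j, Relation.ReflTransGen (fun a b => 0 < A b a) i j) (hw0 : w ≠ 0) (i : n) :
    0 < w i :=
  (hw i).lt_of_ne fun hi =>
    hw0 <| funext fun k => eq_zero_of_reflTransGen hA hw hwL hi.symm (hsc i k)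

end Nonneg

theorem exists_pos_sum_eq_one_vecMul_laplacian_eq_zero [Field R] [LinearOrder R]
    [IsStrictOrderedRing R] [Nonempty n] {A : Matrix n n R} (hA : ∀ i j, 0 ≤ A i j)
    (hsc : ∀ i j, Relation.ReflTransGen (fun a b => 0 < A b a) i j) :
    ∃ ω : n → R, (∀ i, 0 < ω i) ∧ ∑ i, ω i = 1 ∧ ω ᵥ* A.laplacian = 0 := by
  obtain ⟨v, hv0, hv⟩ := exists_ne_zero_vecMul_laplacian_eq_zero (A := A)
  have hpos : ∀ i, 0 < |v| i :=
    pos_of_vecMul_laplacian_eq_zero hA (fun i => abs_nonneg (v i))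
      (abs_vecMul_laplacian_eq_zero hA hv) hsc ((Pi.abs_eq_zero v).not.mpr hv0)
  have hS : 0 < ∑ i, |v| i := sum_pos (fun i _ => hpos i) univ_nonempty
  refine ⟨(∑ i, |v| i)⁻¹ • |v|, fun i => smul_pos (inv_pos.mpr hS) (hpos i), ?_, ?_⟩
  · simp only [Pi.smul_apply, smul_eq_mul, ← mul_sum, inv_mul_cancel₀ hS.ne']
  · rw [smul_vecMul, abs_vecMul_laplacian_eq_zero hA hv, smul_zero]

end Matrix

theorem laplacian_positive_left_eigenvector_general
    (N : ℕ) (hN : 1 ≤ N) (A : Matrix (Fin N) (Fin N) ℝ)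
    (hnonneg : ∀ i j, 0 ≤ A i j)
    (hsc : ∀ i j : Fin N, Relation.ReflTransGen (fun a b => 0 < A b a) i j)
    (L : Matrix (Fin N) (Fin N) ℝ)
    (hL : L = Matrix.diagonal (fun i => ∑ j, A i j) - A) :
    ∃ ω : Fin N → ℝ, (∀ i, 0 < ω i) ∧ (∑ i, ω i = 1) ∧ Matrix.vecMul ω L = 0 := by
  have : Nonempty (Fin N) := ⟨⟨0, hN⟩⟩
  subst hL
  exact Matrix.exists_pos_sum_eq_one_vecMul_laplacian_eq_zero hnonneg hsc

/-- For the Laplacian `L = D - A` of a strongly connected weighted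
digraph (nonnegative adjacency matrix `A`, zero diagonal, edge from `j` to `i` iff
`A i j > 0`), there is a strictly positive left eigenvector `ω` of `L` for the zero
eigenvalue, normalized so that its entries sum to `1`. -/
theorem laplacian_positive_left_eigenvector
    (N : ℕ) (hN : 1 ≤ N) (A : Matrix (Fin N) (Fin N) ℝ)
    (hnonneg : ∀ i j, 0 ≤ A i j) (hdiag : ∀ i, A i i = 0)
    (hsc : ∀ i j : Fin N, Relation.ReflTransGen (fun a b => 0 < A b a) i j)
    (L : Matrix (Fin N) (Fin N) ℝ)
    (hL : L = Matrix.diagonal (fun i => ∑ j, A i j) - A) :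
    ∃ ω : Fin N → ℝ, (∀ i, 0 < ω i) ∧ (∑ i, ω i = 1) ∧ Matrix.vecMul ω L = 0 :=
  laplacian_positive_left_eigenvector_general N hN A hnonneg hsc L hL
end

section
/- (Growth bound under attack.) Under the game setup, assume each partial-gradient map F_i : E → E_i is ι-Lipschitz and x* ∈ E satisfies F(x*) = 0. Let M be any N×N real matrix with M·1_N = 0 and operator norm ‖M‖ (as a linear map on Euclidean ℝ^N). Let X̃_i = x* for all i and define G_M(X)_i = −ι_i(F_i(X_i)) − Σ_j M_{ij} X_j for X ∈ E^N. Then for every X ∈ E^N: ⟨X − X̃, G_M(X)⟩ ≤ (ι + ‖M‖)·‖X − X̃‖². Consequently, every differentiable curve x : [s,u] → E^N with x′(t) = G_M(x(t)) for all t ∈ [s,u] satisfies ‖x(u) − X̃‖ ≤ e^{(ι+‖M‖)(u−s)} ‖x(s) − X̃‖. -/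
open Matrix
open scoped RealInnerProductSpace

noncomputable section

/-- The profile space `E = E_1 × ⋯ × E_N` with the product (ℓ²) inner product,
where `E_i = ℝ^{n i}`. -/
abbrev GSpace {N : ℕ} (n : Fin N → ℕ) : Type :=
  PiLp 2 (fun j : Fin N => EuclideanSpace ℝ (Fin (n j)))

/-- The stacked space `E^N` with the product (ℓ²) inner product. -/
abbrev Stacked {N : ℕ} (n : Fin N → ℕ) : Type :=
  PiLp 2 (fun _ : Fin N => GSpace n)

/-- `ι_i`: the linear embedding of `E_i` into `E` placing a vector in the `i`-th
block and zero elsewhere. -/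
def blockEmb {N : ℕ} (n : Fin N → ℕ) (i : Fin N)
    (z : EuclideanSpace ℝ (Fin (n i))) : GSpace n :=
  WithLp.toLp 2 (Pi.single i z)

/-- The operator norm of `M` as a linear map on Euclidean `ℝ^N`. -/
def euclideanOpNorm {N : ℕ} (M : Matrix (Fin N) (Fin N) ℝ) : ℝ :=
  ‖(Matrix.toEuclideanCLM (𝕜 := ℝ) M :
      EuclideanSpace ℝ (Fin N) →L[ℝ] EuclideanSpace ℝ (Fin N))‖


/-!
Write `Y = X - X̃`. Because `M` has zero row sums, the consensus term `∑ⱼ Mᵢⱼ Xⱼ` equals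
`∑ⱼ Mᵢⱼ Yⱼ`, and `|∑ᵢ ⟪Yᵢ, ∑ⱼ Mᵢⱼ Yⱼ⟫| ≤ ‖M‖ ‖Y‖²`: expanding `Y` in an orthonormal basis of
`E` splits this form into one copy of `v ↦ ⟪v, M v⟫` on `ℝ^N` per basis vector. The gradient
term pairs `Yᵢ` only with its `i`-th block, and `‖Fᵢ(Xᵢ)‖ = ‖Fᵢ(Xᵢ) - Fᵢ(x*)‖ ≤ ι ‖Yᵢ‖`.
The growth bound is Grönwall's inequality for `‖x(t) - X̃‖²`, whose derivative is
`2 ⟪x - X̃, G_M(x)⟫ ≤ 2 (ι + ‖M‖) ‖x - X̃‖²`.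
-/

open Finset

section BlockQuadraticForm

variable {ι : Type*} [Fintype ι] [DecidableEq ι]

lemma Matrix.abs_dotProduct_mulVec_le (M : Matrix ι ι ℝ) (v : EuclideanSpace ℝ ι) :
    |v ⬝ᵥ M *ᵥ v| ≤ ‖toEuclideanCLM (𝕜 := ℝ) M‖ * ‖v‖ ^ 2 := by
  rw [← inner_toEuclideanCLM]
  calc |⟪v, toEuclideanCLM (𝕜 := ℝ) M v⟫| ≤ ‖v‖ * ‖toEuclideanCLM (𝕜 := ℝ) M v‖ :=
        abs_real_inner_le_norm _ _
    _ ≤ ‖v‖ * (‖toEuclideanCLM (𝕜 := ℝ) M‖ * ‖v‖) :=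
        mul_le_mul_of_nonneg_left (ContinuousLinearMap.le_opNorm _ _) (norm_nonneg _)
    _ = ‖toEuclideanCLM (𝕜 := ℝ) M‖ * ‖v‖ ^ 2 := by ring

variable {V : Type*} [NormedAddCommGroup V] [InnerProductSpace ℝ V] [FiniteDimensional ℝ V]

lemma Matrix.abs_sum_inner_sum_smul_le (M : Matrix ι ι ℝ) (Y : PiLp 2 fun _ : ι => V) :
    |∑ i, ⟪Y i, ∑ j, M i j • Y j⟫| ≤ ‖toEuclideanCLM (𝕜 := ℝ) M‖ * ‖Y‖ ^ 2 := by
  set b := stdOrthonormalBasis ℝ V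
  let coord : _ → EuclideanSpace ℝ ι := fun k => WithLp.toLp 2 fun i => ⟪b k, Y i⟫
  have hsum : ∑ i, ⟪Y i, ∑ j, M i j • Y j⟫ = ∑ k, coord k ⬝ᵥ M *ᵥ coord k := by
    have hinner : ∀ i j, ⟪Y i, Y j⟫ = ∑ k, ⟪b k, Y i⟫ * ⟪b k, Y j⟫ := fun i j => by
      simp_rw [← b.sum_inner_mul_inner (Y i) (Y j), real_inner_comm (b _) (Y i)]
    simp only [inner_sum, real_inner_smul_right, hinner, dotProduct, mulVec, coord, mul_sum]
    calc _ = ∑ i, ∑ k, ∑ j, M i j * (⟪b k, Y i⟫ * ⟪b k, Y j⟫) :=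
          sum_congr rfl fun _ _ => sum_comm
      _ = _ := by
          rw [sum_comm]
          exact sum_congr rfl fun k _ => sum_congr rfl fun i _ => sum_congr rfl fun j _ => by ring
  have hnorm : ‖Y‖ ^ 2 = ∑ k, ‖coord k‖ ^ 2 := by
    simp only [PiLp.norm_sq_eq_of_L2, coord, Real.norm_eq_abs, sq_abs, ← b.sum_sq_inner_right]
    exact sum_comm
  rw [hsum, hnorm, mul_sum]
  exact (abs_sum_le_sum_abs _ _).trans (sum_le_sum fun k _ => M.abs_dotProduct_mulVec_le _)

end BlockQuadraticForm

section Gronwall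

variable {E : Type*} [NormedAddCommGroup E] [InnerProductSpace ℝ E]

theorem norm_sub_le_exp_mul_of_inner_deriv_le {x x' : ℝ → E} {c : E} {K s u : ℝ} (hsu : s ≤ u)
    (hx : ContinuousOn x (Set.Icc s u))
    (hx' : ∀ t ∈ Set.Ico s u, HasDerivWithinAt x (x' t) (Set.Ici t) t)
    (hbound : ∀ t ∈ Set.Ico s u, ⟪x t - c, x' t⟫ ≤ K * ‖x t - c‖ ^ 2) :
    ‖x u - c‖ ≤ Real.exp (K * (u - s)) * ‖x s - c‖ := by
  have hsq : ‖x u - c‖ ^ 2 ≤ ‖x s - c‖ ^ 2 * Real.exp (2 * K * (u - s)) := by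
    have := le_gronwallBound_of_liminf_deriv_right_le (f := fun t => ‖x t - c‖ ^ 2)
      (f' := fun t => 2 * ⟪x t - c, x' t⟫) (K := 2 * K) (ε := 0)
      ((hx.sub continuousOn_const).norm.pow 2)
      (fun t ht _ hr => ((hx' t ht).sub_const c).norm_sq.liminf_right_slope_le hr) le_rfl
      (fun t ht => by linarith [hbound t ht]) u ⟨hsu, le_rfl⟩
    rwa [gronwallBound_ε0] at this
  have hexp : Real.exp (2 * K * (u - s)) = Real.exp (K * (u - s)) ^ 2 := by
    rw [← Real.exp_nat_mul]; ring_nf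
  rw [hexp, ← mul_pow, mul_comm] at hsq
  exact le_of_sq_le_sq hsq (by positivity)

end Gronwall

section AttackedField

variable {N : ℕ} {n : Fin N → ℕ}

lemma inner_blockEmb (y : GSpace n) (i : Fin N) (z : EuclideanSpace ℝ (Fin (n i))) :
    ⟪y, blockEmb n i z⟫ = ⟪y i, z⟫ := by
  rw [PiLp.inner_apply, sum_eq_single i]
  · simp [blockEmb]
  · intro j _ hj
    simp [blockEmb, Pi.single_eq_of_ne hj]
  · simp

lemma neg_inner_blockEmb_le_of_lipschitz {i : Fin N} {f : GSpace n → EuclideanSpace ℝ (Fin (n i))}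
    {L : ℝ} (hf : ∀ x y, ‖f x - f y‖ ≤ L * ‖x - y‖) {xstar : GSpace n} (hstar : f xstar = 0)
    (x : GSpace n) : -⟪x - xstar, blockEmb n i (f x)⟫ ≤ L * ‖x - xstar‖ ^ 2 := by
  have hfx : ‖f x‖ ≤ L * ‖x - xstar‖ := by simpa [hstar] using hf x xstar
  rw [inner_blockEmb]
  calc -⟪(x - xstar) i, f x⟫ ≤ ‖(x - xstar) i‖ * ‖f x‖ :=
        (neg_le_abs _).trans (abs_real_inner_le_norm _ _)
    _ ≤ ‖x - xstar‖ * (L * ‖x - xstar‖) :=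
        mul_le_mul (PiLp.norm_apply_le _ i) hfx (norm_nonneg _) (norm_nonneg _)
    _ = L * ‖x - xstar‖ ^ 2 := by ring

lemma inner_sub_attackedField_le {Fp : ∀ i : Fin N, GSpace n → EuclideanSpace ℝ (Fin (n i))}
    {L : ℝ} (hFp : ∀ i x y, ‖Fp i x - Fp i y‖ ≤ L * ‖x - y‖) {xstar : GSpace n}
    (hstar : ∀ i, Fp i xstar = 0) {M : Matrix (Fin N) (Fin N) ℝ} (hM : ∀ i, ∑ j, M i j = 0)
    {Xt : Stacked n} (hXt : ∀ i, Xt i = xstar) (X G : Stacked n)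
    (hG : ∀ i, G i = -blockEmb n i (Fp i (X i)) - ∑ j, M i j • X j) :
    ⟪X - Xt, G⟫ ≤ (L + euclideanOpNorm M) * ‖X - Xt‖ ^ 2 := by
  set Y := X - Xt
  have hY : ∀ i, Y i = X i - xstar := fun i => by rw [PiLp.sub_apply, hXt]
  have hG' : ∀ i, G i = -blockEmb n i (Fp i (X i)) - ∑ j, M i j • Y j := fun i => by
    simp only [hG, hY, smul_sub, sum_sub_distrib, ← sum_smul, hM, zero_smul, sub_zero]
  calc ⟪Y, G⟫ = ∑ i, -⟪X i - xstar, blockEmb n i (Fp i (X i))⟫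
        + -∑ i, ⟪Y i, ∑ j, M i j • Y j⟫ := by
        rw [PiLp.inner_apply, ← sum_neg_distrib, ← sum_add_distrib]
        refine sum_congr rfl fun i _ => ?_
        rw [hG', hY, inner_sub_right, inner_neg_right, sub_eq_add_neg]
    _ ≤ ∑ i, L * ‖Y i‖ ^ 2 + euclideanOpNorm M * ‖Y‖ ^ 2 := by
        refine add_le_add (sum_le_sum fun i _ => ?_)
          ((neg_le_abs _).trans (M.abs_sum_inner_sum_smul_le Y))
        rw [hY]
        exact neg_inner_blockEmb_le_of_lipschitz (hFp i) (hstar i) (X i)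
    _ = (L + euclideanOpNorm M) * ‖Y‖ ^ 2 := by
        rw [← mul_sum, ← PiLp.norm_sq_eq_of_L2]
        ring

end AttackedField

theorem growth_bound_under_attack_general
    (N : ℕ) (n : Fin N → ℕ)
    (Fp : ∀ i : Fin N, GSpace n → EuclideanSpace ℝ (Fin (n i)))
    (F : GSpace n → GSpace n) (hFdef : ∀ x i, F x i = Fp i x)
    (ι : ℝ)
    (hFpLip : ∀ i, ∀ x y : GSpace n, ‖Fp i x - Fp i y‖ ≤ ι * ‖x - y‖)
    (xstar : GSpace n) (hstar : F xstar = 0)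
    (M : Matrix (Fin N) (Fin N) ℝ)
    (hM1 : M.mulVec (fun _ => 1) = 0)
    (Xt : Stacked n) (hXt : ∀ i, Xt i = xstar)
    (GM : Stacked n → Stacked n)
    (hGM : ∀ X i, GM X i = -blockEmb n i (Fp i (X i)) - ∑ j, M i j • X j) :
    (∀ X : Stacked n,
        ⟪X - Xt, GM X⟫ ≤ (ι + euclideanOpNorm M) * ‖X - Xt‖ ^ 2) ∧
    (∀ s u : ℝ, s ≤ u → ∀ x : ℝ → Stacked n,
        (∀ t ∈ Set.Icc s u, HasDerivAt x (GM (x t)) t) →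
        ‖x u - Xt‖ ≤ Real.exp ((ι + euclideanOpNorm M) * (u - s)) * ‖x s - Xt‖) := by
  have hFp : ∀ i, Fp i xstar = 0 := fun i => by rw [← hFdef, hstar]; rfl
  have hM : ∀ i, ∑ j, M i j = 0 := fun i => by
    simpa [mulVec, dotProduct] using congrFun hM1 i
  have key : ∀ X : Stacked n, ⟪X - Xt, GM X⟫ ≤ (ι + euclideanOpNorm M) * ‖X - Xt‖ ^ 2 :=
    fun X => inner_sub_attackedField_le hFpLip hFp hM hXt X (GM X) (hGM X)
  refine ⟨key, fun s u hsu x hx => ?_⟩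
  exact norm_sub_le_exp_mul_of_inner_deriv_le hsu
    (fun t ht => (hx t ht).continuousAt.continuousWithinAt)
    (fun t ht => (hx t (Set.Ico_subset_Icc_self ht)).hasDerivWithinAt)
    (fun t _ => key (x t))

/-- **growth bound under attack.** With `ι`-Lipschitz partial
gradients, `F(x*) = 0`, and any matrix `M` with `M·1 = 0`, the attacked field
`G_M` satisfies `⟨X − X̃, G_M(X)⟩ ≤ (ι + ‖M‖)‖X − X̃‖²`, hence solutions of
`x′ = G_M(x)` on `[s,u]` grow at most like `e^{(ι+‖M‖)(u−s)}`. -/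
theorem growth_bound_under_attack
    (N : ℕ) (hN : 1 ≤ N) (n : Fin N → ℕ)
    (Fp : ∀ i : Fin N, GSpace n → EuclideanSpace ℝ (Fin (n i)))
    (F : GSpace n → GSpace n) (hFdef : ∀ x i, F x i = Fp i x)
    (ι : ℝ) (hι : 0 < ι)
    (hFpLip : ∀ i, ∀ x y : GSpace n, ‖Fp i x - Fp i y‖ ≤ ι * ‖x - y‖)
    (xstar : GSpace n) (hstar : F xstar = 0)
    (M : Matrix (Fin N) (Fin N) ℝ)
    (hM1 : M.mulVec (fun _ => 1) = 0)
    (Xt : Stacked n) (hXt : ∀ i, Xt i = xstar)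
    (GM : Stacked n → Stacked n)
    (hGM : ∀ X i, GM X i = -blockEmb n i (Fp i (X i)) - ∑ j, M i j • X j) :
    (∀ X : Stacked n,
        ⟪X - Xt, GM X⟫ ≤ (ι + euclideanOpNorm M) * ‖X - Xt‖ ^ 2) ∧
    (∀ s u : ℝ, s ≤ u → ∀ x : ℝ → Stacked n,
        (∀ t ∈ Set.Icc s u, HasDerivAt x (GM (x t)) t) →
        ‖x u - Xt‖ ≤ Real.exp ((ι + euclideanOpNorm M) * (u - s)) * ‖x s - Xt‖) :=
  growth_bound_under_attack_general N n Fp F hFdef ι hFpLip xstar hstar M hM1 Xt hXt GM hGM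
end
end
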